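/- arXiv:0910.1447 — 6 statements merged into one kernel-verified Lean document; each statement's English description precedes it below -/
import Mathlib

section
/- Let G be a 4-partite graph with parts V1, V2, V3, V4 where |V1| = 1, such that for every pair i ≠ j the edge density d(V_i,V_j) = e(V_i,V_j)/(|V_i||V_j|) is strictly greater than 1/2. Then G contains a triangle. -/
/-!
Let `v` be the vertex of `V 0` and split every other part `Vᵢ` into the neighbours `Aᵢ` and the
non-neighbours `Bᵢ` of `v`; density towards `v` means `#Aᵢ > #Bᵢ`. In a triangle-free graph there
are no `Aᵢ–Aⱼ` edges, so the density between `Vᵢ` and `Vⱼ` is carried by the `Aᵢ–Bⱼ`, `Bᵢ–Aⱼ` and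
`Bᵢ–Bⱼ` edges. On the other hand a triple of `Aₖ × Bᵢ × Bⱼ` spans at most two edges, so many
`Bᵢ–Bⱼ` edges force many missing `Aₖ–B` edges. Weighting the density inequality of `{i, j}` by
`#Bₖ` and adding the three triple bounds leaves a sum of nonnegative terms that would have to be
negative.
-/

open SimpleGraph Finset

/-- With `dᵢ = pᵢ - qᵢ`, adding `qₖ` times the inequality `hᵢⱼ` (`{i, j, k} = {1, 2, 3}`) and
twice `t₁ + t₂ + t₃` gives `∑ qₖ dᵢ dⱼ + ∑ qₖ + 2 ∑ dₖ bᵢⱼ ≤ 0`, while `h₁₂` forces `b₁₂ > 0`. -/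
lemma false_of_density_of_triangle_bounds
    {p₁ p₂ p₃ q₁ q₂ q₃ a₁₂ a₁₃ a₂₃ c₁₂ c₁₃ c₂₃ b₁₂ b₁₃ b₂₃ : ℕ}
    (hp₁ : q₁ < p₁) (hp₂ : q₂ < p₂) (hp₃ : q₃ < p₃)
    (h₁₂ : (p₁ + q₁) * (p₂ + q₂) < 2 * (a₁₂ + c₁₂ + b₁₂))
    (h₁₃ : (p₁ + q₁) * (p₃ + q₃) < 2 * (a₁₃ + c₁₃ + b₁₃))
    (h₂₃ : (p₂ + q₂) * (p₃ + q₃) < 2 * (a₂₃ + c₂₃ + b₂₃))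
    (t₁ : p₁ * b₂₃ + q₂ * a₁₃ + q₃ * a₁₂ ≤ 2 * (p₁ * q₂ * q₃))
    (t₂ : q₁ * a₂₃ + p₂ * b₁₃ + q₃ * c₁₂ ≤ 2 * (q₁ * p₂ * q₃))
    (t₃ : q₁ * c₂₃ + q₂ * c₁₃ + p₃ * b₁₂ ≤ 2 * (q₁ * q₂ * p₃))
    (ha₁₂ : a₁₂ ≤ p₁ * q₂) (hc₁₂ : c₁₂ ≤ q₁ * p₂) : False := by
  obtain ⟨d₁, rfl⟩ := Nat.exists_eq_add_of_lt hp₁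
  obtain ⟨d₂, rfl⟩ := Nat.exists_eq_add_of_lt hp₂
  obtain ⟨d₃, rfl⟩ := Nat.exists_eq_add_of_lt hp₃
  have hb₁₂ : 0 < b₁₂ := by nlinarith
  nlinarith [Nat.mul_le_mul_left q₃ h₁₂, Nat.mul_le_mul_left q₂ h₁₃, Nat.mul_le_mul_left q₁ h₂₃,
    Nat.zero_le (q₁ * d₂ * d₃), Nat.zero_le (q₂ * d₁ * d₃), Nat.zero_le (q₃ * d₁ * d₂),
    Nat.zero_le (d₁ * b₂₃), Nat.zero_le (d₂ * b₁₃), Nat.zero_le (d₃ * b₁₂)]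

namespace SimpleGraph

variable {α : Type*} {G : SimpleGraph α} [DecidableRel G.Adj]

lemma card_interedges_eq_sum (s t : Finset α) :
    #(G.interedges s t) = ∑ x ∈ s, ∑ y ∈ t, if G.Adj x y then 1 else 0 := by
  rw [interedges_def, card_filter, sum_product]

lemma card_interedges_singleton_left (v : α) (t : Finset α) :
    #(G.interedges {v} t) = #{y ∈ t | G.Adj v y} := by
  rw [card_interedges_eq_sum, sum_singleton, card_filter]

lemma card_interedges_filter_add_filter_not_left (p : α → Prop) [DecidablePred p]
    (s t : Finset α) :
    #(G.interedges {x ∈ s | p x} t) + #(G.interedges {x ∈ s | ¬p x} t) = #(G.interedges s t) := by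
  simp only [card_interedges_eq_sum, sum_filter_add_sum_filter_not]

lemma card_interedges_filter_add_filter_not_right (p : α → Prop) [DecidablePred p]
    (s t : Finset α) :
    #(G.interedges s {y ∈ t | p y}) + #(G.interedges s {y ∈ t | ¬p y}) = #(G.interedges s t) := by
  simp only [card_interedges_eq_sum, ← sum_add_distrib, sum_filter_add_sum_filter_not]

lemma adj_indicator_add_le_two (hG : G.CliqueFree 3) (a b c : α) :
    ((if G.Adj b c then 1 else 0) + (if G.Adj a c then 1 else 0) +
      if G.Adj a b then 1 else 0) ≤ 2 := by
  classical
  have := hG {a, b, c}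
  rw [is3Clique_triple_iff] at this
  split_ifs <;> tauto

/-- Every triple `(a, b, c) ∈ A × B × C` spans at most two edges of a triangle-free graph. -/
lemma card_mul_card_interedges_add_le (hG : G.CliqueFree 3) (A B C : Finset α) :
    #A * #(G.interedges B C) + #B * #(G.interedges A C) + #C * #(G.interedges A B) ≤
      2 * (#A * #B * #C) := by
  calc #A * #(G.interedges B C) + #B * #(G.interedges A C) + #C * #(G.interedges A B)
      = ∑ a ∈ A, ∑ b ∈ B, ∑ c ∈ C, ((if G.Adj b c then 1 else 0) + (if G.Adj a c then 1 else 0)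
          + if G.Adj a b then 1 else 0) := by
        simp only [card_interedges_eq_sum, sum_add_distrib, sum_const, smul_eq_mul, mul_sum]
    _ ≤ ∑ a ∈ A, ∑ b ∈ B, ∑ c ∈ C, 2 :=
        sum_le_sum fun a _ ↦ sum_le_sum fun b _ ↦ sum_le_sum fun c _ ↦
          adj_indicator_add_le_two hG a b c
    _ = 2 * (#A * #B * #C) := by simp only [sum_const, smul_eq_mul]; ring

lemma interedges_filter_adj_eq_empty (hG : G.CliqueFree 3) (v : α) (s t : Finset α) :
    G.interedges {x ∈ s | G.Adj v x} {y ∈ t | G.Adj v y} = ∅ := by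
  classical
  refine eq_empty_of_forall_notMem fun ⟨x, y⟩ hxy ↦ ?_
  simp only [mk_mem_interedges_iff, mem_filter] at hxy
  exact hG {v, x, y} (is3Clique_triple_iff.mpr ⟨hxy.1.2, hxy.2.1.2, hxy.2.2⟩)

lemma card_interedges_eq_of_cliqueFree_three (hG : G.CliqueFree 3) (v : α) (s t : Finset α) :
    #(G.interedges s t) = #(G.interedges {x ∈ s | G.Adj v x} {y ∈ t | ¬G.Adj v y}) +
      #(G.interedges {x ∈ s | ¬G.Adj v x} {y ∈ t | G.Adj v y}) +
      #(G.interedges {x ∈ s | ¬G.Adj v x} {y ∈ t | ¬G.Adj v y}) := by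
  rw [← card_interedges_filter_add_filter_not_left (G.Adj v) s t,
    ← card_interedges_filter_add_filter_not_right (G.Adj v),
    ← card_interedges_filter_add_filter_not_right (G.Adj v) {x ∈ s | ¬G.Adj v x},
    interedges_filter_adj_eq_empty hG, card_empty, zero_add, add_assoc]

lemma mul_card_lt_two_mul_card_interedges {s t : Finset α} (h : 1 / 2 < G.edgeDensity s t) :
    #s * #t < 2 * #(G.interedges s t) := by
  rw [edgeDensity_def] at h
  have hpos : (0 : ℚ) < #s * #t := by
    by_contra! h0
    rw [le_antisymm h0 (by positivity), div_zero] at h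
    norm_num at h
  rw [lt_div_iff₀ hpos] at h
  exact_mod_cast (by linarith : (#s * #t : ℚ) < 2 * #(G.interedges s t))

lemma card_lt_two_mul_card_filter_adj {v : α} {t : Finset α}
    (h : 1 / 2 < G.edgeDensity {v} t) : #t < 2 * #{y ∈ t | G.Adj v y} := by
  simpa [card_interedges_singleton_left] using mul_card_lt_two_mul_card_interedges h

lemma not_cliqueFree_three_of_dense (v : α) (U₁ U₂ U₃ : Finset α)
    (hv₁ : #U₁ < 2 * #{x ∈ U₁ | G.Adj v x}) (hv₂ : #U₂ < 2 * #{x ∈ U₂ | G.Adj v x})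
    (hv₃ : #U₃ < 2 * #{x ∈ U₃ | G.Adj v x})
    (h₁₂ : #U₁ * #U₂ < 2 * #(G.interedges U₁ U₂)) (h₁₃ : #U₁ * #U₃ < 2 * #(G.interedges U₁ U₃))
    (h₂₃ : #U₂ * #U₃ < 2 * #(G.interedges U₂ U₃)) : ¬G.CliqueFree 3 := by
  intro hG
  set A₁ := {x ∈ U₁ | G.Adj v x}
  set A₂ := {x ∈ U₂ | G.Adj v x}
  set A₃ := {x ∈ U₃ | G.Adj v x}
  set B₁ := {x ∈ U₁ | ¬G.Adj v x}
  set B₂ := {x ∈ U₂ | ¬G.Adj v x}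
  set B₃ := {x ∈ U₃ | ¬G.Adj v x}
  have hU₁ : #U₁ = #A₁ + #B₁ := (card_filter_add_card_filter_not _).symm
  have hU₂ : #U₂ = #A₂ + #B₂ := (card_filter_add_card_filter_not _).symm
  have hU₃ : #U₃ = #A₃ + #B₃ := (card_filter_add_card_filter_not _).symm
  rw [card_interedges_eq_of_cliqueFree_three hG v, hU₁, hU₂] at h₁₂
  rw [card_interedges_eq_of_cliqueFree_three hG v, hU₁, hU₃] at h₁₃
  rw [card_interedges_eq_of_cliqueFree_three hG v, hU₂, hU₃] at h₂₃
  exact false_of_density_of_triangle_bounds (by omega) (by omega) (by omega) h₁₂ h₁₃ h₂₃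
    (card_mul_card_interedges_add_le hG A₁ B₂ B₃) (card_mul_card_interedges_add_le hG B₁ A₂ B₃)
    (card_mul_card_interedges_add_le hG B₁ B₂ A₃) (card_interedges_le_mul G A₁ B₂)
    (card_interedges_le_mul G B₁ A₂)

end SimpleGraph

theorem stmt0_general {α : Type*}
    (G : SimpleGraph α) [DecidableRel G.Adj] (V : Fin 4 → Finset α)
    (hone : (V 0).card = 1)
    (hdens : ∀ i j, i ≠ j → (1 : ℚ) / 2 < G.edgeDensity (V i) (V j)) :
    ¬ G.CliqueFree 3 := by
  obtain ⟨v, hv⟩ := card_eq_one.mp hone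
  have hapex (i : Fin 4) (hi : i ≠ 0) : #(V i) < 2 * #{x ∈ V i | G.Adj v x} :=
    card_lt_two_mul_card_filter_adj (hv ▸ hdens 0 i hi.symm)
  have hpair (i j : Fin 4) (hij : i ≠ j) : #(V i) * #(V j) < 2 * #(G.interedges (V i) (V j)) :=
    mul_card_lt_two_mul_card_interedges (hdens i j hij)
  exact not_cliqueFree_three_of_dense v (V 1) (V 2) (V 3)
    (hapex 1 (by decide)) (hapex 2 (by decide)) (hapex 3 (by decide))
    (hpair 1 2 (by decide)) (hpair 1 3 (by decide)) (hpair 2 3 (by decide))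

theorem stmt0 {α : Type*} [Fintype α] [DecidableEq α]
    (G : SimpleGraph α) [DecidableRel G.Adj] (V : Fin 4 → Finset α)
    (hpart : ∀ v : α, ∃! i, v ∈ V i)
    (hind : ∀ i, ∀ x ∈ V i, ∀ y ∈ V i, ¬ G.Adj x y)
    (hone : (V 0).card = 1)
    (hdens : ∀ i j, i ≠ j → (1 : ℚ) / 2 < G.edgeDensity (V i) (V j)) :
    ¬ G.CliqueFree 3 :=
  stmt0_general G V hone hdens
end

section
/- Let G be a triangle-free 3-partite graph with parts V1, V2, V3, each of size n, with all pairwise edge densities d(V_i,V_j) ≥ 1/2. Then for every vertex x of G and every pair of distinct indices j ≠ k, one has |N(x) ∩ V_j| · |N(x) ∩ V_k| ≤ n²/2. -/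
/-! If `x` is adjacent to `a ∈ V j` and `b ∈ V k`, then `ab` is not an edge, since `G` is
triangle-free. So the pairs in `(N(x) ∩ V j) × (N(x) ∩ V k)` are non-edges between `V j` and
`V k`, and there are at most `n² / 2` of those because the density is at least `1 / 2`. -/

open SimpleGraph Finset

namespace SimpleGraph

variable {α : Type*} (G : SimpleGraph α) [DecidableRel G.Adj]

lemma card_interedges_eq_edgeDensity_mul (s t : Finset α) :
    (#(G.interedges s t) : ℚ) = G.edgeDensity s t * (#s * #t) := by
  rcases s.eq_empty_or_nonempty with rfl | hs
  · simp
  rcases t.eq_empty_or_nonempty with rfl | ht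
  · simp [interedges_def]
  rw [edgeDensity_def, div_mul_cancel₀]
  positivity

lemma disjoint_interedges_neighborFinset_product [Fintype α] [DecidableEq α]
    (hG : G.CliqueFree 3) (x : α) (s t : Finset α) :
    Disjoint (G.interedges s t) ((G.neighborFinset x ∩ s) ×ˢ (G.neighborFinset x ∩ t)) := by
  refine Finset.disjoint_left.mpr fun p hp hpN => ?_
  obtain ⟨-, -, hadj⟩ := (G.mem_interedges_iff).mp hp
  simp only [mem_product, mem_inter, mem_neighborFinset] at hpN
  exact hG {x, p.1, p.2} (is3Clique_triple_iff.mpr ⟨hpN.1.1, hpN.2.1, hadj⟩)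

lemma card_interedges_add_card_mul_card_le [Fintype α] [DecidableEq α]
    (hG : G.CliqueFree 3) (x : α) (s t : Finset α) :
    #(G.interedges s t) + #(G.neighborFinset x ∩ s) * #(G.neighborFinset x ∩ t) ≤
      #s * #t := by
  rw [← card_product, ← card_union_of_disjoint
    (G.disjoint_interedges_neighborFinset_product hG x s t), ← card_product]
  refine card_le_card (union_subset (fun p hp => ?_) ?_)
  · obtain ⟨hs, ht, -⟩ := (G.mem_interedges_iff).mp hp
    exact mem_product.mpr ⟨hs, ht⟩
  · exact product_subset_product inter_subset_right inter_subset_right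

end SimpleGraph

theorem stmt4_general {α : Type*} [Fintype α] [DecidableEq α] {n : ℕ}
    (G : SimpleGraph α) [DecidableRel G.Adj] (V : Fin 3 → Finset α)
    (hcard : ∀ i, (V i).card = n)
    (hdens : ∀ i j, i ≠ j → (1 : ℚ) / 2 ≤ G.edgeDensity (V i) (V j))
    (htf : G.CliqueFree 3) :
    ∀ (x : α) (j k : Fin 3), j ≠ k →
      (((G.neighborFinset x ∩ V j).card : ℚ) * ((G.neighborFinset x ∩ V k).card : ℚ)
        ≤ (n : ℚ) ^ 2 / 2) := by
  intro x j k hjk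
  have hcount : (#(G.interedges (V j) (V k)) : ℚ)
      + #(G.neighborFinset x ∩ V j) * #(G.neighborFinset x ∩ V k) ≤ n ^ 2 := by
    have := G.card_interedges_add_card_mul_card_le htf x (V j) (V k)
    rw [hcard, hcard, ← sq] at this
    exact_mod_cast this
  have hedges : (n : ℚ) ^ 2 / 2 ≤ #(G.interedges (V j) (V k)) := by
    rw [G.card_interedges_eq_edgeDensity_mul, hcard, hcard]
    nlinarith [hdens j k hjk, sq_nonneg (n : ℚ)]
  linarith

theorem stmt4 {α : Type*} [Fintype α] [DecidableEq α] {n : ℕ}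
    (G : SimpleGraph α) [DecidableRel G.Adj] (V : Fin 3 → Finset α)
    (hpart : ∀ v : α, ∃! i, v ∈ V i)
    (hind : ∀ i, ∀ x ∈ V i, ∀ y ∈ V i, ¬ G.Adj x y)
    (hcard : ∀ i, (V i).card = n) (hn : 0 < n)
    (hdens : ∀ i j, i ≠ j → (1 : ℚ) / 2 ≤ G.edgeDensity (V i) (V j))
    (htf : G.CliqueFree 3) :
    ∀ (x : α) (j k : Fin 3), j ≠ k →
      (((G.neighborFinset x ∩ V j).card : ℚ) * ((G.neighborFinset x ∩ V k).card : ℚ)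
        ≤ (n : ℚ) ^ 2 / 2) :=
  stmt4_general G V hcard hdens htf
end

section
/- Let ℓ ≥ 4 and let G be a balanced ℓ-partite graph with parts V1, ..., Vℓ each of size n, with all pairwise edge densities d(V_i,V_j) ≥ 1/2, and suppose G contains no triangle. Then every independent set X of G satisfies |X| ≤ (ℓ+1)n/2. -/
/-!
Fix a set `S` of parts and an independent set `Y`; we show `∑_{m ∈ S} |Y ∩ V_m| ≤ (|S| + 1) n / 2`
by strong induction on `S`. If every part meets `Y` in at most `n / 2` vertices this is clear.
Otherwise pick a part `V_l` with `x := |Y ∩ V_l| > n / 2` and count the edges from `V_l` to the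
remaining parts, of which there are at least `(|S| - 1) n² / 2`. A vertex of `Y ∩ V_l` has no
neighbour in `Y`, while the neighbourhood of any other vertex is independent (the graph is
triangle-free), so the induction hypothesis bounds its degree into the remaining parts. Comparing
the two counts leaves a quadratic inequality in `x` that holds exactly because `n / 2 ≤ x ≤ n`.
-/

open SimpleGraph Finset

lemma add_le_of_double_count {n x r σ : ℚ} (hx : n / 2 < x) (hxn : x ≤ n)
    (h : r * (n * n / 2) ≤ x * (r * n - σ) + (n - x) * ((r + 1) * n / 2)) :
    σ + x ≤ (r + 2) * n / 2 := by
  nlinarith [mul_nonneg (sub_nonneg.2 hxn) (sub_nonneg.2 hx.le)]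

namespace SimpleGraph

variable {α ι : Type*} (G : SimpleGraph α) [DecidableRel G.Adj]

lemma card_interedges_eq_sum_card_filter_adj (s t : Finset α) :
    #(G.interedges s t) = ∑ v ∈ s, #{w ∈ t | G.Adj v w} := by
  simp only [interedges_def, card_filter, sum_product]

lemma mul_card_le_card_interedges {d : ℚ} {s t : Finset α} (h : d ≤ G.edgeDensity s t) :
    d * (#s * #t) ≤ #(G.interedges s t) := by
  rcases eq_or_ne ((#s : ℚ) * #t) 0 with h0 | h0
  · simp [h0]
  · rwa [edgeDensity_def, le_div_iff₀ (lt_of_le_of_ne (by positivity) h0.symm)] at h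

variable [DecidableEq α]

lemma card_filter_adj_add_card_inter_le {Y : Finset α} (hY : G.IsIndepSet (Y : Set α)) {v : α}
    (hv : v ∈ Y) (t : Finset α) : #{w ∈ t | G.Adj v w} + #(Y ∩ t) ≤ #t := by
  rw [← card_union_of_disjoint]
  · exact card_le_card (union_subset (filter_subset _ _) inter_subset_right)
  · rw [Finset.disjoint_left]
    intro w hw hwY
    have hadj := (mem_filter.1 hw).2
    exact hY hv (mem_inter.1 hwY).1 (G.ne_of_adj hadj) hadj

lemma neighborFinset_inter [Fintype α] (v : α) (t : Finset α) :
    G.neighborFinset v ∩ t = {w ∈ t | G.Adj v w} := by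
  ext w
  simp [and_comm]

variable {G} {V : ι → Finset α} {n : ℕ}

/-- Double counting of the edges between `V l` and the parts indexed by `e`. -/
lemma card_mul_le_of_neighbors_bounded {Y : Finset α} (hY : G.IsIndepSet (Y : Set α)) {l : ι}
    {e : Finset ι} (hl : l ∉ e) (hcard : ∀ i, #(V i) = n)
    (hdens : ∀ i j, i ≠ j → (1 : ℚ) / 2 ≤ G.edgeDensity (V i) (V j))
    (hnbr : ∀ v, (∑ m ∈ e, #{w ∈ V m | G.Adj v w} : ℚ) ≤ (#e + 1) * n / 2) :
    (#e : ℚ) * (n * n / 2) ≤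
      #(Y ∩ V l) * (#e * n - ∑ m ∈ e, (#(Y ∩ V m) : ℚ)) + (n - #(Y ∩ V l)) * ((#e + 1) * n / 2) := by
  set F : α → ℚ := fun v ↦ ∑ m ∈ e, (#{w ∈ V m | G.Adj v w} : ℚ)
  have hlower : (#e : ℚ) * (n * n / 2) ≤ ∑ v ∈ V l, F v := by
    rw [sum_comm, ← nsmul_eq_mul, ← sum_const]
    refine sum_le_sum fun m hm ↦ ?_
    have hlm : l ≠ m := fun h ↦ hl (h ▸ hm)
    have := G.mul_card_le_card_interedges (hdens l m hlm)
    rw [card_interedges_eq_sum_card_filter_adj, hcard, hcard] at this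
    push_cast at this
    linarith
  have hY_part : ∀ v ∈ V l ∩ Y, F v ≤ #e * n - ∑ m ∈ e, (#(Y ∩ V m) : ℚ) := by
    intro v hv
    calc F v ≤ ∑ m ∈ e, ((n : ℚ) - #(Y ∩ V m)) := sum_le_sum fun m _ ↦ by
          have := G.card_filter_adj_add_card_inter_le hY (mem_inter.1 hv).2 (V m)
          rw [hcard] at this
          rw [le_sub_iff_add_le]
          exact_mod_cast this
      _ = _ := by rw [sum_sub_distrib, sum_const, nsmul_eq_mul]
  have hcard_sdiff : (#(V l \ Y) : ℚ) = n - #(Y ∩ V l) := by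
    have := card_sdiff_add_card_inter (V l) Y
    rw [hcard, inter_comm] at this
    rw [eq_sub_iff_add_eq]
    exact_mod_cast this
  calc (#e : ℚ) * (n * n / 2) ≤ ∑ v ∈ V l, F v := hlower
    _ = ∑ v ∈ V l ∩ Y, F v + ∑ v ∈ V l \ Y, F v := (sum_inter_add_sum_sdiff _ _ _).symm
    _ ≤ _ := by
      gcongr
      · simpa [inter_comm] using sum_le_card_nsmul _ _ _ hY_part
      · simpa [hcard_sdiff] using sum_le_card_nsmul _ _ _ fun v (_ : v ∈ V l \ Y) ↦ hnbr v

theorem sum_card_inter_le_of_cliqueFree [Fintype α] [DecidableEq ι] (hcard : ∀ i, #(V i) = n)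
    (hdens : ∀ i j, i ≠ j → (1 : ℚ) / 2 ≤ G.edgeDensity (V i) (V j)) (htf : G.CliqueFree 3)
    (S : Finset ι) (Y : Finset α) (hY : G.IsIndepSet (Y : Set α)) :
    (∑ m ∈ S, #(Y ∩ V m) : ℚ) ≤ (#S + 1) * n / 2 := by
  induction S using Finset.strongInduction generalizing Y with
  | H S ih =>
  by_cases hsmall : ∀ m ∈ S, (#(Y ∩ V m) : ℚ) ≤ n / 2
  · calc (∑ m ∈ S, #(Y ∩ V m) : ℚ) ≤ ∑ _m ∈ S, (n : ℚ) / 2 := sum_le_sum hsmall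
      _ ≤ _ := by rw [sum_const, nsmul_eq_mul]; linarith [(n.cast_nonneg : (0 : ℚ) ≤ n)]
  push Not at hsmall
  obtain ⟨l, hlS, hlarge⟩ := hsmall
  have hnbr (v : α) :
      (∑ m ∈ S.erase l, #{w ∈ V m | G.Adj v w} : ℚ) ≤ (#(S.erase l) + 1) * n / 2 := by
    simpa only [neighborFinset_inter] using ih _ (erase_ssubset hlS) (G.neighborFinset v)
      (by simpa using G.isIndepSet_neighborSet_of_triangleFree htf v)
  have hstep := card_mul_le_of_neighbors_bounded hY (notMem_erase l S) hcard hdens hnbr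
  have hxn : (#(Y ∩ V l) : ℚ) ≤ n := by
    exact_mod_cast hcard l ▸ card_le_card inter_subset_right
  rw [← add_sum_erase S _ hlS, ← card_erase_add_one hlS]
  push_cast
  linarith [add_le_of_double_count hlarge hxn hstep]

end SimpleGraph

theorem stmt5_general {α : Type*} [Fintype α] [DecidableEq α] {ℓ n : ℕ}
    (G : SimpleGraph α) [DecidableRel G.Adj] (V : Fin ℓ → Finset α)
    (hpart : ∀ v : α, ∃! i, v ∈ V i)
    (hcard : ∀ i, (V i).card = n)
    (hdens : ∀ i j, i ≠ j → (1 : ℚ) / 2 ≤ G.edgeDensity (V i) (V j))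
    (htf : G.CliqueFree 3)
    (X : Finset α) (hX : ∀ x ∈ X, ∀ y ∈ X, ¬ G.Adj x y) :
    (X.card : ℚ) ≤ ((ℓ : ℚ) + 1) * n / 2 := by
  have hcover : X ⊆ univ.biUnion fun i ↦ X ∩ V i := fun x hx ↦ by
    obtain ⟨i, hi, -⟩ := hpart x
    exact mem_biUnion.2 ⟨i, mem_univ _, mem_inter.2 ⟨hx, hi⟩⟩
  calc (#X : ℚ) ≤ ∑ i, (#(X ∩ V i) : ℚ) := by
        exact_mod_cast (card_le_card hcover).trans card_biUnion_le
    _ ≤ (#(univ : Finset (Fin ℓ)) + 1) * n / 2 :=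
        sum_card_inter_le_of_cliqueFree hcard hdens htf univ X fun x hx y hy _ ↦ hX x hx y hy
    _ = ((ℓ : ℚ) + 1) * n / 2 := by rw [card_univ, Fintype.card_fin]

theorem stmt5 {α : Type*} [Fintype α] [DecidableEq α] {ℓ n : ℕ} (hl : 4 ≤ ℓ)
    (G : SimpleGraph α) [DecidableRel G.Adj] (V : Fin ℓ → Finset α)
    (hpart : ∀ v : α, ∃! i, v ∈ V i)
    (hind : ∀ i, ∀ x ∈ V i, ∀ y ∈ V i, ¬ G.Adj x y)
    (hcard : ∀ i, (V i).card = n) (hn : 0 < n)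
    (hdens : ∀ i j, i ≠ j → (1 : ℚ) / 2 ≤ G.edgeDensity (V i) (V j))
    (htf : G.CliqueFree 3)
    (X : Finset α) (hX : ∀ x ∈ X, ∀ y ∈ X, ¬ G.Adj x y) :
    (X.card : ℚ) ≤ ((ℓ : ℚ) + 1) * n / 2 :=
  stmt5_general G V hpart hcard hdens htf X hX
end

section
/- Let ℓ ≥ 4 and let G be a balanced triangle-free ℓ-partite graph with parts of size n and all pairwise densities d(V_i,V_j) ≥ 1/2. Then every vertex x of G satisfies d(x) ≤ n + (ℓ-2)n/2. -/
open SimpleGraph Finset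

section Aux

variable {α : Type*} [Fintype α] [DecidableEq α]

/-- The number of non-adjacent (ordered) pairs between two finsets. -/
private def nu (G : SimpleGraph α) [DecidableRel G.Adj] (s t : Finset α) : ℕ :=
  ((s ×ˢ t).filter fun e => ¬ G.Adj e.1 e.2).card

private lemma nu_union_left (G : SimpleGraph α) [DecidableRel G.Adj] {s₁ s₂ : Finset α}
    (t : Finset α) (h : Disjoint s₁ s₂) :
    nu G (s₁ ∪ s₂) t = nu G s₁ t + nu G s₂ t := by
  unfold nu
  rw [Finset.union_product, Finset.filter_union]
  refine Finset.card_union_of_disjoint (Finset.disjoint_left.2 ?_)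
  intro e he1 he2
  simp only [Finset.mem_filter, Finset.mem_product] at he1 he2
  exact (Finset.disjoint_left.1 h) he1.1.1 he2.1.1

private lemma nu_union_right (G : SimpleGraph α) [DecidableRel G.Adj] (s : Finset α)
    {t₁ t₂ : Finset α} (h : Disjoint t₁ t₂) :
    nu G s (t₁ ∪ t₂) = nu G s t₁ + nu G s t₂ := by
  unfold nu
  rw [Finset.product_union, Finset.filter_union]
  refine Finset.card_union_of_disjoint (Finset.disjoint_left.2 ?_)
  intro e he1 he2
  simp only [Finset.mem_filter, Finset.mem_product] at he1 he2
  exact (Finset.disjoint_left.1 h) he1.1.2 he2.1.2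

/-- Master counting lemma in a triangle-free graph: every triple in `X × Y × Z` contains a
non-adjacent pair. -/
private lemma master (G : SimpleGraph α) [DecidableRel G.Adj] (htf : G.CliqueFree 3)
    (X Y Z : Finset α) :
    X.card * Y.card * Z.card ≤
      nu G X Y * Z.card + nu G X Z * Y.card + nu G Y Z * X.card := by
  classical
  set P : Finset (α × α × α) := X ×ˢ (Y ×ˢ Z) with hP
  have hsub : P ⊆ (P.filter fun e => ¬ G.Adj e.1 e.2.1) ∪
      ((P.filter fun e => ¬ G.Adj e.1 e.2.2) ∪ (P.filter fun e => ¬ G.Adj e.2.1 e.2.2)) := by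
    intro e he
    by_cases h1 : G.Adj e.1 e.2.1
    · by_cases h2 : G.Adj e.1 e.2.2
      · by_cases h3 : G.Adj e.2.1 e.2.2
        · exact absurd (is3Clique_triple_iff.2 ⟨h1, h2, h3⟩) (htf _)
        · simp only [Finset.mem_union, Finset.mem_filter]
          exact Or.inr (Or.inr ⟨he, h3⟩)
      · simp only [Finset.mem_union, Finset.mem_filter]
        exact Or.inr (Or.inl ⟨he, h2⟩)
    · simp only [Finset.mem_union, Finset.mem_filter]
      exact Or.inl ⟨he, h1⟩
  have h1 : (P.filter fun e => ¬ G.Adj e.1 e.2.1).card ≤ nu G X Y * Z.card := by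
    unfold nu
    rw [← Finset.card_product]
    apply Finset.card_le_card_of_injOn (fun e => ((e.1, e.2.1), e.2.2))
    · intro e he
      simp only [Finset.mem_coe, hP, Finset.mem_filter, Finset.mem_product] at he
      simp only [Finset.mem_coe, Finset.mem_product, Finset.mem_filter]
      exact ⟨⟨⟨he.1.1, he.1.2.1⟩, he.2⟩, he.1.2.2⟩
    · intro e₁ _ e₂ _ h
      simp only [Prod.ext_iff] at h
      exact Prod.ext h.1.1 (Prod.ext h.1.2 h.2)
  have h2 : (P.filter fun e => ¬ G.Adj e.1 e.2.2).card ≤ nu G X Z * Y.card := by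
    unfold nu
    rw [← Finset.card_product]
    apply Finset.card_le_card_of_injOn (fun e => ((e.1, e.2.2), e.2.1))
    · intro e he
      simp only [Finset.mem_coe, hP, Finset.mem_filter, Finset.mem_product] at he
      simp only [Finset.mem_coe, Finset.mem_product, Finset.mem_filter]
      exact ⟨⟨⟨he.1.1, he.1.2.2⟩, he.2⟩, he.1.2.1⟩
    · intro e₁ _ e₂ _ h
      simp only [Prod.ext_iff] at h
      exact Prod.ext h.1.1 (Prod.ext h.2 h.1.2)
  have h3 : (P.filter fun e => ¬ G.Adj e.2.1 e.2.2).card ≤ nu G Y Z * X.card := by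
    unfold nu
    rw [← Finset.card_product]
    apply Finset.card_le_card_of_injOn (fun e => ((e.2.1, e.2.2), e.1))
    · intro e he
      simp only [Finset.mem_coe, hP, Finset.mem_filter, Finset.mem_product] at he
      simp only [Finset.mem_coe, Finset.mem_product, Finset.mem_filter]
      exact ⟨⟨⟨he.1.2.1, he.1.2.2⟩, he.2⟩, he.1.1⟩
    · intro e₁ _ e₂ _ h
      simp only [Prod.ext_iff] at h
      exact Prod.ext h.2 (Prod.ext h.1.1 h.1.2)
  have hPcard : P.card = X.card * Y.card * Z.card := by
    rw [hP, Finset.card_product, Finset.card_product, mul_assoc]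
  calc X.card * Y.card * Z.card = P.card := hPcard.symm
    _ ≤ ((P.filter fun e => ¬ G.Adj e.1 e.2.1) ∪
        ((P.filter fun e => ¬ G.Adj e.1 e.2.2) ∪
          (P.filter fun e => ¬ G.Adj e.2.1 e.2.2))).card := Finset.card_le_card hsub
    _ ≤ (P.filter fun e => ¬ G.Adj e.1 e.2.1).card +
        ((P.filter fun e => ¬ G.Adj e.1 e.2.2) ∪
          (P.filter fun e => ¬ G.Adj e.2.1 e.2.2)).card := Finset.card_union_le _ _
    _ ≤ (P.filter fun e => ¬ G.Adj e.1 e.2.1).card +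
        ((P.filter fun e => ¬ G.Adj e.1 e.2.2).card +
          (P.filter fun e => ¬ G.Adj e.2.1 e.2.2).card) := by
          exact Nat.add_le_add_left (Finset.card_union_le _ _) _
    _ ≤ nu G X Y * Z.card + (nu G X Z * Y.card + nu G Y Z * X.card) := by
          exact Nat.add_le_add h1 (Nat.add_le_add h2 h3)
    _ = _ := by ring

end Aux
set_option linter.unusedSectionVars false

section Aux2

variable {α : Type*} [Fintype α] [DecidableEq α]

private lemma arith_contra {n a b c α1 α2 α3 β1 β2 β3 γ1 γ2 γ3 : ℤ}
    (S1 : (n - b) * (n - c) ≤ α1 + β1 + γ1)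
    (S2 : (n - a) * (n - c) ≤ α2 + β2 + γ2)
    (S3 : (n - a) * (n - b) ≤ α3 + β3 + γ3)
    (g1 : 2 * (a * b + α1 + α2 + α3) ≤ n ^ 2)
    (g2 : 2 * (a * c + β1 + β2 + β3) ≤ n ^ 2)
    (g3 : 2 * (b * c + γ1 + γ2 + γ3) ≤ n ^ 2)
    (h1 : 1 ≤ 2 * a - n) (h2 : 1 ≤ 2 * b - n) (h3 : 1 ≤ 2 * c - n) : False := by
  have p12 : (1 : ℤ) ≤ (2 * a - n) * (2 * b - n) := by
    simpa using mul_le_mul h1 h2 zero_le_one (by linarith)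
  have p13 : (1 : ℤ) ≤ (2 * a - n) * (2 * c - n) := by
    simpa using mul_le_mul h1 h3 zero_le_one (by linarith)
  have p23 : (1 : ℤ) ≤ (2 * b - n) * (2 * c - n) := by
    simpa using mul_le_mul h2 h3 zero_le_one (by linarith)
  nlinarith [S1, S2, S3, g1, g2, g3, p12, p13, p23]

/-- There are no three parts in which `x` has strict majority neighborhoods. -/
private lemma no_three (G : SimpleGraph α) [DecidableRel G.Adj] (htf : G.CliqueFree 3)
    {n : ℕ} (x : α) (P Q R : Finset α)
    (hPc : P.card = n) (hQc : Q.card = n) (hRc : R.card = n)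
    (hPQ : 2 * nu G P Q ≤ n ^ 2) (hPR : 2 * nu G P R ≤ n ^ 2) (hQR : 2 * nu G Q R ≤ n ^ 2)
    (hmP : n < 2 * (P.filter fun y => G.Adj x y).card)
    (hmQ : n < 2 * (Q.filter fun y => G.Adj x y).card)
    (hmR : n < 2 * (R.filter fun y => G.Adj x y).card) : False := by
  classical
  set A := P.filter (fun y => G.Adj x y) with hA
  set A' := P.filter (fun y => ¬ G.Adj x y) with hA'
  set B := Q.filter (fun y => G.Adj x y) with hB
  set B' := Q.filter (fun y => ¬ G.Adj x y) with hB'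
  set C := R.filter (fun y => G.Adj x y) with hC
  set C' := R.filter (fun y => ¬ G.Adj x y) with hC'
  have hAsum : A.card + A'.card = n := by
    rw [hA, hA', ← hPc]; exact Finset.card_filter_add_card_filter_not _
  have hBsum : B.card + B'.card = n := by
    rw [hB, hB', ← hQc]; exact Finset.card_filter_add_card_filter_not _
  have hCsum : C.card + C'.card = n := by
    rw [hC, hC', ← hRc]; exact Finset.card_filter_add_card_filter_not _
  -- splittings of the non-edge counts
  have hsplit : ∀ S T : Finset α,
      nu G S T = nu G (S.filter fun y => G.Adj x y) (T.filter fun y => G.Adj x y) +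
        nu G (S.filter fun y => G.Adj x y) (T.filter fun y => ¬ G.Adj x y) +
        (nu G (S.filter fun y => ¬ G.Adj x y) (T.filter fun y => G.Adj x y) +
         nu G (S.filter fun y => ¬ G.Adj x y) (T.filter fun y => ¬ G.Adj x y)) := by
    intro S T
    conv_lhs => rw [← Finset.filter_union_filter_not_eq (fun y => G.Adj x y) S]
    rw [nu_union_left _ _ (Finset.disjoint_filter_filter_not S S _)]
    congr 1
    · conv_lhs => rw [← Finset.filter_union_filter_not_eq (fun y => G.Adj x y) T]
      exact nu_union_right _ _ (Finset.disjoint_filter_filter_not T T _)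
    · conv_lhs => rw [← Finset.filter_union_filter_not_eq (fun y => G.Adj x y) T]
      exact nu_union_right _ _ (Finset.disjoint_filter_filter_not T T _)
  -- non-edges between two neighborhoods of x: everything
  have hfull : ∀ S T : Finset α,
      nu G (S.filter fun y => G.Adj x y) (T.filter fun y => G.Adj x y) =
        (S.filter fun y => G.Adj x y).card * (T.filter fun y => G.Adj x y).card := by
    intro S T
    unfold nu
    rw [Finset.filter_true_of_mem, Finset.card_product]
    rintro ⟨u, v⟩ huv
    rw [Finset.mem_product] at huv
    obtain ⟨hu, hv⟩ := huv
    rw [Finset.mem_filter] at hu hv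
    intro hadj
    exact htf _ (is3Clique_triple_iff.2 ⟨hu.2, hv.2, hadj⟩)
  have hsPQ := hsplit P Q
  have hsPR := hsplit P R
  have hsQR := hsplit Q R
  rw [hfull P Q] at hsPQ
  rw [hfull P R] at hsPR
  rw [hfull Q R] at hsQR
  rw [← hA, ← hA', ← hB, ← hB'] at hsPQ
  rw [← hA, ← hA', ← hC, ← hC'] at hsPR
  rw [← hB, ← hB', ← hC, ← hC'] at hsQR
  -- size comparisons between majorities and minorities
  have hposA : 0 < A.card := by omega
  have hposB : 0 < B.card := by omega
  have hposC : 0 < C.card := by omega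
  have hb'a : B'.card ≤ A.card := by omega
  have hc'a : C'.card ≤ A.card := by omega
  have ha'b : A'.card ≤ B.card := by omega
  have hc'b : C'.card ≤ B.card := by omega
  have ha'c : A'.card ≤ C.card := by omega
  have hb'c : B'.card ≤ C.card := by omega
  -- three master-lemma instances, with coefficients reduced
  have S1 : B'.card * C'.card ≤ nu G A B' + nu G A C' + nu G B' C' := by
    have hm := master G htf A B' C'
    have : A.card * (B'.card * C'.card) ≤
        A.card * (nu G A B' + nu G A C' + nu G B' C') := by
      calc A.card * (B'.card * C'.card) = A.card * B'.card * C'.card := by ring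
        _ ≤ nu G A B' * C'.card + nu G A C' * B'.card + nu G B' C' * A.card := hm
        _ ≤ nu G A B' * A.card + nu G A C' * A.card + nu G B' C' * A.card := by
            exact Nat.add_le_add (Nat.add_le_add (Nat.mul_le_mul le_rfl hc'a)
              (Nat.mul_le_mul le_rfl hb'a)) le_rfl
        _ = A.card * (nu G A B' + nu G A C' + nu G B' C') := by ring
    exact Nat.le_of_mul_le_mul_left this hposA
  have S2 : A'.card * C'.card ≤ nu G A' B + nu G A' C' + nu G B C' := by
    have hm := master G htf A' B C'
    have : B.card * (A'.card * C'.card) ≤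
        B.card * (nu G A' B + nu G A' C' + nu G B C') := by
      calc B.card * (A'.card * C'.card) = A'.card * B.card * C'.card := by ring
        _ ≤ nu G A' B * C'.card + nu G A' C' * B.card + nu G B C' * A'.card := hm
        _ ≤ nu G A' B * B.card + nu G A' C' * B.card + nu G B C' * B.card := by
            exact Nat.add_le_add (Nat.add_le_add (Nat.mul_le_mul le_rfl hc'b) le_rfl)
              (Nat.mul_le_mul le_rfl ha'b)
        _ = B.card * (nu G A' B + nu G A' C' + nu G B C') := by ring
    exact Nat.le_of_mul_le_mul_left this hposB
  have S3 : A'.card * B'.card ≤ nu G A' B' + nu G A' C + nu G B' C := by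
    have hm := master G htf A' B' C
    have : C.card * (A'.card * B'.card) ≤
        C.card * (nu G A' B' + nu G A' C + nu G B' C) := by
      calc C.card * (A'.card * B'.card) = A'.card * B'.card * C.card := by ring
        _ ≤ nu G A' B' * C.card + nu G A' C * B'.card + nu G B' C * A'.card := hm
        _ ≤ nu G A' B' * C.card + nu G A' C * C.card + nu G B' C * C.card := by
            exact Nat.add_le_add (Nat.add_le_add le_rfl
              (Nat.mul_le_mul le_rfl hb'c)) (Nat.mul_le_mul le_rfl ha'c)
        _ = C.card * (nu G A' B' + nu G A' C + nu G B' C) := by ring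
    exact Nat.le_of_mul_le_mul_left this hposC
  -- budgets
  rw [hsPQ] at hPQ
  rw [hsPR] at hPR
  rw [hsQR] at hQR
  -- final arithmetic contradiction
  zify at S1 S2 S3 hPQ hPR hQR hAsum hBsum hCsum hmP hmQ hmR
  have eA : (A'.card : ℤ) = n - A.card := by linarith
  have eB : (B'.card : ℤ) = n - B.card := by linarith
  have eC : (C'.card : ℤ) = n - C.card := by linarith
  rw [eB, eC] at S1
  rw [eA, eC] at S2
  rw [eA, eB] at S3
  exact arith_contra S1 S2 S3 (by linarith) (by linarith) (by linarith)
    (by linarith) (by linarith) (by linarith)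

end Aux2
theorem stmt6 {α : Type*} [Fintype α] [DecidableEq α] {ℓ n : ℕ} (hl : 4 ≤ ℓ)
    (G : SimpleGraph α) [DecidableRel G.Adj] (V : Fin ℓ → Finset α)
    (hpart : ∀ v : α, ∃! i, v ∈ V i)
    (hind : ∀ i, ∀ x ∈ V i, ∀ y ∈ V i, ¬ G.Adj x y)
    (hcard : ∀ i, (V i).card = n) (hn : 0 < n)
    (hdens : ∀ i j, i ≠ j → (1 : ℚ) / 2 ≤ G.edgeDensity (V i) (V j))
    (htf : G.CliqueFree 3) :
    ∀ x : α, (G.degree x : ℚ) ≤ (n : ℚ) + ((ℓ : ℚ) - 2) * n / 2 := by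
  intro x
  classical
  obtain ⟨i0, hxi0, -⟩ := hpart x
  set a : Fin ℓ → ℕ := fun j => ((V j).filter fun y => G.Adj x y).card with ha
  -- the degree of x is the sum of its neighborhood sizes in the parts
  have hdeg : G.degree x = ∑ j, a j := by
    rw [← card_neighborFinset_eq_degree, neighborFinset_eq_filter]
    have hU : (univ.filter fun y => G.Adj x y) =
        univ.biUnion (fun j => (V j).filter fun y => G.Adj x y) := by
      ext v
      rw [mem_filter, mem_biUnion]
      constructor
      · rintro ⟨-, hv⟩
        obtain ⟨i, hi, -⟩ := hpart v
        exact ⟨i, mem_univ i, mem_filter.2 ⟨hi, hv⟩⟩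
      · rintro ⟨i, -, hv⟩
        exact ⟨mem_univ v, (mem_filter.1 hv).2⟩
    rw [hU, card_biUnion]
    intro j _ k _ hjk
    refine disjoint_left.2 fun v hv1 hv2 => hjk ?_
    exact ExistsUnique.unique (hpart v) (mem_filter.1 hv1).1 (mem_filter.1 hv2).1
  -- x has no neighbors in its own part
  have h0 : a i0 = 0 := by
    rw [ha]
    simp only [card_eq_zero, filter_eq_empty_iff]
    exact fun y hy => hind i0 x hxi0 y hy
  have halen : ∀ j, a j ≤ n := fun j => (hcard j) ▸ card_filter_le _ _
  -- density bound on non-edges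
  have hnud : ∀ j k, j ≠ k → 2 * nu G (V j) (V k) ≤ n ^ 2 := by
    intro j k hjk
    have hd := hdens j k hjk
    have hcd : (G.interedges (V j) (V k)).card + nu G (V j) (V k) = n ^ 2 := by
      have h := Finset.card_filter_add_card_filter_not
        (s := (V j) ×ˢ (V k)) (p := fun e => G.Adj e.1 e.2)
      rw [card_product, hcard j, hcard k, ← sq] at h
      exact h
    have hE : (n : ℚ) * n ≤ 2 * (G.interedges (V j) (V k)).card := by
      rw [edgeDensity_def, hcard j, hcard k] at hd
      have hn' : (0 : ℚ) < (n : ℚ) * n := by positivity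
      rw [div_le_div_iff₀ (by norm_num) hn'] at hd
      linarith
    have hE' : n ^ 2 ≤ 2 * (G.interedges (V j) (V k)).card := by
      have : ((n ^ 2 : ℕ) : ℚ) ≤ ((2 * (G.interedges (V j) (V k)).card : ℕ) : ℚ) := by
        push_cast
        nlinarith [hE]
      exact_mod_cast this
    omega
  -- pairwise bound
  have hpairs : ∀ j k, j ≠ k → 2 * (a j * a k) ≤ n ^ 2 := by
    intro j k hjk
    have hsub : a j * a k ≤ nu G (V j) (V k) := by
      rw [ha]
      unfold nu
      rw [← card_product]
      apply card_le_card
      intro e he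
      rw [mem_product] at he
      obtain ⟨hu, hv⟩ := he
      rw [mem_filter] at hu hv
      refine mem_filter.2 ⟨mem_product.2 ⟨hu.1, hv.1⟩, fun hadj => ?_⟩
      exact htf _ (is3Clique_triple_iff.2 ⟨hu.2, hv.2, hadj⟩)
    have := hnud j k hjk
    omega
  -- no three majority parts
  have hno3 : ∀ j k l : Fin ℓ, j ≠ k → j ≠ l → k ≠ l →
      n < 2 * a j → n < 2 * a k → n < 2 * a l → False := by
    intro j k l hjk hjl hkl hj hk hl
    exact no_three G htf x (V j) (V k) (V l) (hcard j) (hcard k) (hcard l)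
      (hnud j k hjk) (hnud j l hjl) (hnud k l hkl) hj hk hl
  -- arithmetic assembly
  set S : Finset (Fin ℓ) := univ.erase i0 with hS
  have hScard : S.card = ℓ - 1 := by
    rw [hS, card_erase_of_mem (mem_univ i0), card_univ, Fintype.card_fin]
  set M : Finset (Fin ℓ) := S.filter (fun j => n < 2 * a j) with hM
  have hMle : M.card ≤ 2 := by
    by_contra hcon
    push_neg at hcon
    obtain ⟨T, hTM, hT3⟩ := exists_subset_card_eq (show 3 ≤ M.card by omega)
    obtain ⟨j, k, l, hjk, hjl, hkl, rfl⟩ := card_eq_three.1 hT3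
    have hjM := hTM (show j ∈ ({j, k, l} : Finset (Fin ℓ)) by simp)
    have hkM := hTM (show k ∈ ({j, k, l} : Finset (Fin ℓ)) by simp)
    have hlM := hTM (show l ∈ ({j, k, l} : Finset (Fin ℓ)) by simp)
    rw [hM, mem_filter] at hjM hkM hlM
    exact hno3 j k l hjk hjl hkl hjM.2 hkM.2 hlM.2
  have hsplit : ∑ j ∈ M, a j + ∑ j ∈ S.filter (fun j => ¬ n < 2 * a j), a j = ∑ j ∈ S, a j :=
    sum_filter_add_sum_filter_not S _ a
  have hrest : 2 * ∑ j ∈ S.filter (fun j => ¬ n < 2 * a j), a j ≤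
      (S.filter (fun j => ¬ n < 2 * a j)).card * n := by
    rw [Finset.mul_sum]
    calc ∑ j ∈ S.filter (fun j => ¬ n < 2 * a j), 2 * a j ≤
        ∑ _j ∈ S.filter (fun j => ¬ n < 2 * a j), n := by
          refine Finset.sum_le_sum fun j hj => ?_
          have := (mem_filter.1 hj).2
          omega
      _ = (S.filter (fun j => ¬ n < 2 * a j)).card * n := by
          rw [Finset.sum_const, smul_eq_mul]
  have hcards : M.card + (S.filter (fun j => ¬ n < 2 * a j)).card = ℓ - 1 := by
    rw [← hScard, hM]
    exact Finset.card_filter_add_card_filter_not _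
  have hMbound : 2 * ∑ j ∈ M, a j ≤ M.card * n + n := by
    have hMcases : M.card = 0 ∨ M.card = 1 ∨ M.card = 2 := by omega
    rcases hMcases with h | h | h
    · rw [card_eq_zero.1 h]
      simp
    · obtain ⟨j, hMj⟩ := card_eq_one.1 h
      rw [h, hMj, sum_singleton]
      have := halen j
      omega
    · obtain ⟨j, k, hjk, hMjk⟩ := card_eq_two.1 h
      rw [h, hMjk, sum_pair hjk]
      have hp := hpairs j k hjk
      have h1 := halen j
      have h2 := halen k
      -- 2 * (a j + a k) ≤ 3 * n
      have key : (n : ℤ) * (2 * (a j + a k)) ≤ n * (3 * n) := by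
        have e1 : ((n : ℤ) - a j) * ((n : ℤ) - a k) ≥ 0 := by
          apply mul_nonneg <;> simp only [sub_nonneg] <;> exact_mod_cast ‹_›
        have hp' : 2 * ((a j : ℤ) * a k) ≤ (n : ℤ) ^ 2 := by exact_mod_cast hp
        nlinarith [e1, hp']
      have key2 : 2 * (a j + a k) ≤ 3 * n := by
        have := le_of_mul_le_mul_left key (show (0 : ℤ) < n by exact_mod_cast hn)
        exact_mod_cast this
      omega
  have htot : 2 * ∑ j, a j ≤ ℓ * n := by
    have hsum0 : ∑ j ∈ S, a j = ∑ j, a j := by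
      rw [hS]
      exact Finset.sum_erase _ h0
    have hfle : (S.filter (fun j => ¬ n < 2 * a j)).card ≤ ℓ - 1 := by omega
    have : 2 * ∑ j, a j = 2 * ∑ j ∈ M, a j +
        2 * ∑ j ∈ S.filter (fun j => ¬ n < 2 * a j), a j := by
      rw [← hsum0, ← hsplit]; ring
    rw [this]
    have hml2 : M.card ≤ 2 := hMle
    have hl4 : 4 ≤ ℓ := hl
    have := hMbound
    have := hrest
    -- combine: ≤ (M.card * n + n) + (ℓ - 1 - M.card) * n ≤ ℓ * n
    have hcc : (S.filter (fun j => ¬ n < 2 * a j)).card = ℓ - 1 - M.card := by omega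
    rw [hcc] at hrest
    have hfin : M.card * n + n + (ℓ - 1 - M.card) * n ≤ ℓ * n := by
      have h1 : M.card ≤ ℓ - 1 := by omega
      have : M.card * n + (ℓ - 1 - M.card) * n = (ℓ - 1) * n := by
        rw [← Nat.add_mul]
        congr 1
        omega
      rw [add_right_comm, this]
      have : (ℓ - 1) * n + n = ℓ * n := by
        have : ℓ - 1 + 1 = ℓ := by omega
        calc (ℓ - 1) * n + n = (ℓ - 1 + 1) * n := by ring
          _ = ℓ * n := by rw [this]
      omega
    omega
  rw [hdeg]
  have hq : ((2 * ∑ j, a j : ℕ) : ℚ) ≤ ((ℓ * n : ℕ) : ℚ) := Nat.cast_le.2 htot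
  push_cast at hq ⊢
  linarith
end

section
/- For every k ≥ 3 and ℓ ≥ (k-1)!, there exists an ℓ-partite graph G with parts V1, ..., Vℓ such that d(V_i,V_j) ≥ (k-2)/(k-1) for all i ≠ j and G contains no K^k. (Hence d^k_ℓ ≥ (k-2)/(k-1) for all ℓ.) -/
/-! Take `Fin ℓ × Fin (k - 1)` with parts `{i} × Fin (k - 1)`, and join `(i, s)` to `(i', s')` iff
`i ≠ i'` and `s ≠ s'`. The second coordinate is a proper `(k - 1)`-colouring, so there is no `K^k`;
a vertex of part `i` misses exactly one vertex of part `j`, so every density is `1 - 1/(k - 1)`. -/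

open SimpleGraph Finset

namespace SimpleGraph

variable {V W : Type*}

lemma interedges_comap_equiv (e : V ≃ W) (H : SimpleGraph W) [DecidableRel H.Adj]
    [DecidableRel (H.comap e).Adj] (s t : Finset W) :
    (H.comap e).interedges (s.map e.symm.toEmbedding) (t.map e.symm.toEmbedding) =
      (H.interedges s t).map (e.symm.prodCongr e.symm).toEmbedding := by
  ext ⟨x, y⟩
  simp [mem_interedges_iff]

lemma edgeDensity_comap_equiv (e : V ≃ W) (H : SimpleGraph W) [DecidableRel H.Adj]
    [DecidableRel (H.comap e).Adj] (s t : Finset W) :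
    (H.comap e).edgeDensity (s.map e.symm.toEmbedding) (t.map e.symm.toEmbedding) =
      H.edgeDensity s t := by
  rw [edgeDensity_def, edgeDensity_def, interedges_comap_equiv, card_map, card_map, card_map]

end SimpleGraph

def crossGraph (ι α : Type*) : SimpleGraph (ι × α) where
  Adj x y := x.1 ≠ y.1 ∧ x.2 ≠ y.2
  symm := ⟨fun _ _ h => ⟨h.1.symm, h.2.symm⟩⟩
  loopless := ⟨fun _ h => h.1 rfl⟩

namespace crossGraph

variable {ι α : Type*}

@[simp]
lemma adj {x y : ι × α} : (crossGraph ι α).Adj x y ↔ x.1 ≠ y.1 ∧ x.2 ≠ y.2 := Iff.rfl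

instance [DecidableEq ι] [DecidableEq α] : DecidableRel (crossGraph ι α).Adj :=
  fun _ _ => decidable_of_iff' _ adj

lemma colorable [Fintype α] : (crossGraph ι α).Colorable (Fintype.card α) :=
  (Coloring.mk (G := crossGraph ι α) Prod.snd fun h => h.2).colorable

lemma card_interedges_fiber [DecidableEq ι] [Fintype α] [DecidableEq α] {i j : ι} (hij : i ≠ j) :
    #((crossGraph ι α).interedges ({i} ×ˢ univ) ({j} ×ˢ univ)) =
      Fintype.card α * Fintype.card α - Fintype.card α := by
  let f (p : α × α) : (ι × α) × (ι × α) := ((i, p.1), (j, p.2))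
  have hf : f.Injective := fun p q h => by simpa [f, Prod.ext_iff] using h
  have : (crossGraph ι α).interedges ({i} ×ˢ univ) ({j} ×ˢ univ) = univ.offDiag.image f := by
    ext ⟨⟨i₁, a⟩, ⟨j₁, b⟩⟩
    simp only [f, mem_interedges_iff, mem_product, mem_singleton, mem_univ, adj, mem_image,
      mem_offDiag, Prod.exists, Prod.mk.injEq]
    constructor
    · rintro ⟨⟨rfl, -⟩, ⟨rfl, -⟩, -, hab⟩
      exact ⟨a, b, ⟨trivial, trivial, hab⟩, ⟨rfl, rfl⟩, ⟨rfl, rfl⟩⟩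
    · rintro ⟨a, b, ⟨-, -, hab⟩, ⟨rfl, rfl⟩, ⟨rfl, rfl⟩⟩
      exact ⟨⟨rfl, trivial⟩, ⟨rfl, trivial⟩, hij, hab⟩
  rw [this, card_image_of_injective _ hf, offDiag_card, card_univ]

lemma edgeDensity_fiber [DecidableEq ι] [Fintype α] [DecidableEq α] {i j : ι} (hij : i ≠ j) :
    (crossGraph ι α).edgeDensity ({i} ×ˢ univ) ({j} ×ˢ univ) =
      ((Fintype.card α : ℚ) - 1) / Fintype.card α := by
  rw [edgeDensity_def, card_interedges_fiber hij]
  simp only [card_product, card_singleton, card_univ, one_mul]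
  rcases (Fintype.card α).eq_zero_or_pos with h | h
  · simp [h]
  · rw [Nat.cast_sub (Nat.le_mul_self _)]
    field_simp
    push_cast
    ring

end crossGraph

theorem stmt10_general {k ℓ : ℕ} (hk : 3 ≤ k) :
    ∃ (n : ℕ) (G : SimpleGraph (Fin n)) (_ : DecidableRel G.Adj)
      (V : Fin ℓ → Finset (Fin n)),
      (∀ v, ∃! i, v ∈ V i) ∧
      (∀ i, ∀ x ∈ V i, ∀ y ∈ V i, ¬ G.Adj x y) ∧
      (∀ i, (V i).Nonempty) ∧
      (∀ i j, i ≠ j →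
        ((k : ℚ) - 2) / ((k : ℚ) - 1) ≤ G.edgeDensity (V i) (V j)) ∧
      G.CliqueFree k := by
  obtain ⟨m, rfl⟩ : ∃ m, k = m + 1 := ⟨k - 1, by omega⟩
  let e : Fin (ℓ * m) ≃ Fin ℓ × Fin m := finProdFinEquiv.symm
  let V (i : Fin ℓ) := ({i} ×ˢ univ).map e.symm.toEmbedding
  have mem_V (v i) : v ∈ V i ↔ (e v).1 = i := by simp [V, Prod.ext_iff, eq_comm]
  refine ⟨ℓ * m, (crossGraph (Fin ℓ) (Fin m)).comap e, inferInstance, V, ?_, ?_, ?_, ?_, ?_⟩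
  · exact fun v => ⟨(e v).1, (mem_V _ _).2 rfl, fun j hj => ((mem_V _ _).1 hj).symm⟩
  · rintro i x hx y hy ⟨hne, -⟩
    exact hne (((mem_V _ _).1 hx).trans ((mem_V _ _).1 hy).symm)
  · exact fun i => ((singleton_nonempty i).product (univ_nonempty_iff.2 ⟨⟨0, by omega⟩⟩)).map
  · intro i j hij
    rw [edgeDensity_comap_equiv, crossGraph.edgeDensity_fiber hij, Fintype.card_fin]
    exact le_of_eq (by push_cast; ring)
  · exact (crossGraph.colorable.of_hom (Hom.comap e _)).cliqueFree (by simp)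

theorem stmt10 {k ℓ : ℕ} (hk : 3 ≤ k) (hl : (k - 1).factorial ≤ ℓ) :
    ∃ (n : ℕ) (G : SimpleGraph (Fin n)) (_ : DecidableRel G.Adj)
      (V : Fin ℓ → Finset (Fin n)),
      (∀ v, ∃! i, v ∈ V i) ∧
      (∀ i, ∀ x ∈ V i, ∀ y ∈ V i, ¬ G.Adj x y) ∧
      (∀ i, (V i).Nonempty) ∧
      (∀ i j, i ≠ j →
        ((k : ℚ) - 2) / ((k : ℚ) - 1) ≤ G.edgeDensity (V i) (V j)) ∧
      G.CliqueFree k :=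
  stmt10_general hk
end

section
/- Let n > 0 and let d_1, ..., d_ℓ be nonnegative reals with d_m ≤ n for all m, at most two of the d_m exceeding n/2, and d_m d_{m'} ≤ n²/2 for all m ≠ m'. Let D = Σ d_m and suppose D ≥ n. Then D² - Σ_m d_m² ≥ D² - n² - (D - n)·(n/2). -/
open Finset

theorem stmt13 {ℓ : ℕ} {n : ℝ} (hn : 0 < n) (d : Fin ℓ → ℝ)
    (h0 : ∀ m, 0 ≤ d m) (h1 : ∀ m, d m ≤ n)
    (h2 : (Finset.univ.filter fun m => n / 2 < d m).card ≤ 2)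
    (h3 : ∀ m m', m ≠ m' → d m * d m' ≤ n ^ 2 / 2)
    (hD : n ≤ ∑ m, d m) :
    (∑ m, d m) ^ 2 - ∑ m, (d m) ^ 2
      ≥ (∑ m, d m) ^ 2 - n ^ 2 - ((∑ m, d m) - n) * (n / 2) := by
  set T := Finset.univ.filter fun m => n / 2 < d m with hT
  have hsq : ∑ m ∈ T, (d m) ^ 2 + ∑ m ∈ Finset.univ.filter (fun m => ¬ n / 2 < d m), (d m) ^ 2
      = ∑ m, (d m) ^ 2 := Finset.sum_filter_add_sum_filter_not _ _ _
  have hsum : ∑ m ∈ T, d m + ∑ m ∈ Finset.univ.filter (fun m => ¬ n / 2 < d m), d m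
      = ∑ m, d m := Finset.sum_filter_add_sum_filter_not _ _ _
  have hsmall : ∑ m ∈ Finset.univ.filter (fun m => ¬ n / 2 < d m), (d m) ^ 2
      ≤ (n / 2) * ∑ m ∈ Finset.univ.filter (fun m => ¬ n / 2 < d m), d m := by
    rw [Finset.mul_sum]
    refine Finset.sum_le_sum fun m hm => ?_
    have hm' : d m ≤ n / 2 := le_of_not_gt (Finset.mem_filter.mp hm).2
    nlinarith [h0 m]
  have hnonneg : 0 ≤ ∑ m ∈ Finset.univ.filter (fun m => ¬ n / 2 < d m), d m :=
    Finset.sum_nonneg fun m _ => h0 m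
  have key : ∑ m ∈ T, (d m) ^ 2 ≤ n ^ 2 / 2 + (n / 2) * ∑ m ∈ T, d m := by
    interval_cases h : T.card
    · rw [Finset.card_eq_zero] at h
      rw [h]
      simp
      positivity
    · obtain ⟨i, hi⟩ := Finset.card_eq_one.mp h
      have hiT : i ∈ T := by rw [hi]; exact Finset.mem_singleton_self i
      have h2i : n / 2 < d i := (Finset.mem_filter.mp hiT).2
      rw [hi, Finset.sum_singleton, Finset.sum_singleton]
      nlinarith [h0 i, h1 i]
    · obtain ⟨i, j, hij, hTij⟩ := Finset.card_eq_two.mp h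
      have hiT : i ∈ T := by rw [hTij]; simp
      have hjT : j ∈ T := by rw [hTij]; simp
      have h2i : n / 2 < d i := (Finset.mem_filter.mp hiT).2
      have h2j : n / 2 < d j := (Finset.mem_filter.mp hjT).2
      rw [hTij, Finset.sum_pair hij, Finset.sum_pair hij]
      have hp := h3 i j hij
      have hs : d i + d j ≤ 3 * n / 2 := by
        nlinarith [mul_nonneg (sub_nonneg.2 (h1 i)) (sub_nonneg.2 (h1 j))]
      nlinarith [mul_nonneg (sub_nonneg.2 (h1 i)) (sub_nonneg.2 (h1 j)),
        mul_nonneg (by linarith : (0:ℝ) ≤ d i + d j - n) (by linarith : (0:ℝ) ≤ 3 * n / 2 - (d i + d j))]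
  nlinarith [hsq, hsum, hsmall, key]
end
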